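/- arXiv:1911.08759 — 2 statements merged into one kernel-verified Lean document; each statement's English description precedes it below -/
import Mathlib

section
/- Let n⁽¹⁾, n⁽²⁾, n⁽³⁾ ∈ ℝ² be pairwise linearly independent vectors and let t⁽²⁾, t⁽³⁾ ∈ ℝ² be nonzero vectors with t⁽²⁾·n⁽²⁾ = 0 and t⁽³⁾·n⁽³⁾ = 0. Then the 4×4 matrix A = [[n⁽¹⁾₁, n⁽¹⁾₂, 0, 0], [0, 0, n⁽¹⁾₁, n⁽¹⁾₂], [t⁽²⁾₁n⁽²⁾₁, t⁽²⁾₁n⁽²⁾₂, t⁽²⁾₂n⁽²⁾₁, t⁽²⁾₂n⁽²⁾₂], [t⁽³⁾₁n⁽³⁾₁, t⁽³⁾₁n⁽³⁾₂, t⁽³⁾₂n⁽³⁾₁, t⁽³⁾₂n⁽³⁾₂]] is invertible. Equivalently, the linear map sending a 2×2 real matrix G to (G n⁽¹⁾, t⁽²⁾·(G n⁽²⁾), t⁽³⁾·(G n⁽³⁾)) ∈ ℝ² × ℝ × ℝ is a linear isomorphism from the space of 2×2 real matrices onto ℝ⁴. -/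
/-!
Common abstract framework for the staggered DG (SDG) method for the Brinkman
problem of Zhao–Chung–Lam.  The computational plane is `ℝ²` (as a Euclidean
space); a staggered mesh is recorded as a structure containing the simplicial
submesh `Th`, the primal edges `Fu` (with interior primal edges `Fu0`), the
dual edges `Fp`, together with unit normals/tangents, the two triangles
adjacent to each edge, the orientation signs used for jumps, and basic
geometric axioms.  Discrete (broken piecewise-polynomial) functions are
represented by families of functions indexed by the triangle on which they
live, so that jumps across edges are honest algebraic expressions.
-/

open MeasureTheory Finset

noncomputable section

abbrev V2 : Type := EuclideanSpace ℝ (Fin 2)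
abbrev M2 : Type := Matrix (Fin 2) (Fin 2) ℝ

/-- One-dimensional Hausdorff measure on the plane, used to integrate over edges. -/
def edgeM : Measure V2 := Measure.hausdorffMeasure 1

/-- `f` coincides on `s` with a polynomial of total degree at most `k`. -/
def IsPolyOn (k : ℕ) (s : Set V2) (f : V2 → ℝ) : Prop :=
  ∃ p : MvPolynomial (Fin 2) ℝ, p.totalDegree ≤ k ∧
    ∀ x ∈ s, f x = MvPolynomial.eval (fun i => x i) p

/-- `f` coincides on `s` with a polynomial of total degree strictly less than `k`
(for `k = 0` there is no such polynomial: this encodes the space `P^{k-1}`). -/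
def IsPolyOnLt (k : ℕ) (s : Set V2) (f : V2 → ℝ) : Prop :=
  ∃ p : MvPolynomial (Fin 2) ℝ, p.totalDegree < k ∧
    ∀ x ∈ s, f x = MvPolynomial.eval (fun i => x i) p

def IsPolyOnV (k : ℕ) (s : Set V2) (f : V2 → Fin 2 → ℝ) : Prop :=
  ∀ i, IsPolyOn k s fun x => f x i

def IsPolyOnM (k : ℕ) (s : Set V2) (G : V2 → M2) : Prop :=
  ∀ i j, IsPolyOn k s fun x => G x i j

def IsPolyOnLtV (k : ℕ) (s : Set V2) (f : V2 → Fin 2 → ℝ) : Prop :=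
  ∀ i, IsPolyOnLt k s fun x => f x i

def IsPolyOnLtM (k : ℕ) (s : Set V2) (G : V2 → M2) : Prop :=
  ∀ i j, IsPolyOnLt k s fun x => G x i j

/-- Partial derivative `∂f/∂x_j` (via the Fréchet derivative). -/
def pd (f : V2 → ℝ) (j : Fin 2) (x : V2) : ℝ :=
  fderiv ℝ f x (EuclideanSpace.single j (1 : ℝ))

/-- `L²`-norm of a scalar function over a set. -/
def nL2S0 (s : Set V2) (f : V2 → ℝ) : ℝ := Real.sqrt (∫ x in s, f x ^ 2)

/-- `L²`-norm of a vector field over a set. -/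
def nL2V0 (s : Set V2) (f : V2 → Fin 2 → ℝ) : ℝ := Real.sqrt (∫ x in s, ∑ i, f x i ^ 2)

/-- `H^m`-seminorm of a scalar function over `s`. -/
def sobSemiS (m : ℕ) (s : Set V2) (f : V2 → ℝ) : ℝ :=
  Real.sqrt (∫ x in s, ‖iteratedFDeriv ℝ m f x‖ ^ 2)

/-- `H^m`-norm of a scalar function over `s`. -/
def sobNormS (m : ℕ) (s : Set V2) (f : V2 → ℝ) : ℝ :=
  Real.sqrt (∑ j ∈ Finset.range (m + 1), ∫ x in s, ‖iteratedFDeriv ℝ j f x‖ ^ 2)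

/-- `H^m`-seminorm of a vector field over `s`. -/
def sobSemiV (m : ℕ) (s : Set V2) (f : V2 → Fin 2 → ℝ) : ℝ :=
  Real.sqrt (∑ i, ∫ x in s, ‖iteratedFDeriv ℝ m (fun y => f y i) x‖ ^ 2)

/-- `H^m`-norm of a vector field over `s`. -/
def sobNormV (m : ℕ) (s : Set V2) (f : V2 → Fin 2 → ℝ) : ℝ :=
  Real.sqrt (∑ i, ∑ j ∈ Finset.range (m + 1), ∫ x in s, ‖iteratedFDeriv ℝ j (fun y => f y i) x‖ ^ 2)

/-- `H^m`-seminorm of a matrix field over `s`. -/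
def sobSemiM (m : ℕ) (s : Set V2) (G : V2 → M2) : ℝ :=
  Real.sqrt (∑ i, ∑ j, ∫ x in s, ‖iteratedFDeriv ℝ m (fun y => G y i j) x‖ ^ 2)

/-- `H^m`-norm of a matrix field over `s`. -/
def sobNormM (m : ℕ) (s : Set V2) (G : V2 → M2) : ℝ :=
  Real.sqrt (∑ i, ∑ j, ∑ l ∈ Finset.range (m + 1),
    ∫ x in s, ‖iteratedFDeriv ℝ l (fun y => G y i j) x‖ ^ 2)

/-- A staggered mesh on a bounded polygonal domain `Ω ⊆ ℝ²`:
the simplicial submesh `Th`, the primal edges `Fu`, the interior primal edges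
`Fu0 ⊆ Fu`, the dual edges `Fp`, unit normal `nrm` and tangent `tng` on each
edge, the (at most two) triangles `tri1 e`, `tri2 e` adjacent to an edge `e`,
the orientation signs `sgn1`, `sgn2` defining jumps, and edge lengths `he`. -/
structure SDGMesh where
  Ω : Set V2
  openΩ : IsOpen Ω
  bddΩ : Bornology.IsBounded Ω
  Th : Finset (Set V2)
  Fu : Finset (Set V2)
  Fu0 : Finset (Set V2)
  Fp : Finset (Set V2)
  fu0_sub : Fu0 ⊆ Fu
  nrm : Set V2 → V2
  tng : Set V2 → V2
  tri1 : Set V2 → Set V2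
  tri2 : Set V2 → Set V2
  sgn1 : Set V2 → ℝ
  sgn2 : Set V2 → ℝ
  he : Set V2 → ℝ
  cover : ⋃ τ ∈ (Th : Set (Set V2)), τ = closure Ω
  tri_convex : ∀ τ ∈ Th, Convex ℝ τ ∧ IsCompact τ ∧ (interior τ).Nonempty
  tri_disj : ∀ τ₁ ∈ Th, ∀ τ₂ ∈ Th, τ₁ ≠ τ₂ → interior τ₁ ∩ interior τ₂ = ∅
  edge_seg : ∀ e, (e ∈ Fu ∨ e ∈ Fp) → ∃ a b : V2, a ≠ b ∧ e = segment ℝ a b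
  he_eq : ∀ e, (e ∈ Fu ∨ e ∈ Fp) → he e = (edgeM e).toReal
  he_pos : ∀ e, (e ∈ Fu ∨ e ∈ Fp) → 0 < he e
  nrm_unit : ∀ e, (e ∈ Fu ∨ e ∈ Fp) → ∑ i, nrm e i ^ 2 = 1
  tng_unit : ∀ e, (e ∈ Fu ∨ e ∈ Fp) → ∑ i, tng e i ^ 2 = 1
  nrm_tng : ∀ e, (e ∈ Fu ∨ e ∈ Fp) → ∑ i, nrm e i * tng e i = 0
  nrm_perp : ∀ e, (e ∈ Fu ∨ e ∈ Fp) → ∀ x ∈ e, ∀ y ∈ e, ∑ i, (x i - y i) * nrm e i = 0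
  tri1_mem : ∀ e, (e ∈ Fu ∨ e ∈ Fp) → tri1 e ∈ Th
  tri2_mem : ∀ e, (e ∈ Fu0 ∨ e ∈ Fp) → tri2 e ∈ Th
  edge_sub1 : ∀ e, (e ∈ Fu ∨ e ∈ Fp) → e ⊆ frontier (tri1 e)
  edge_sub2 : ∀ e, (e ∈ Fu0 ∨ e ∈ Fp) → e ⊆ frontier (tri2 e)
  sgn1_pm : ∀ e, sgn1 e = 1 ∨ sgn1 e = -1
  sgn2_eq : ∀ e, (e ∈ Fu0 ∨ e ∈ Fp) → sgn2 e = - sgn1 e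
  sgn2_bd : ∀ e ∈ Fu, e ∉ Fu0 → sgn2 e = 0
  outward1 : ∀ e, (e ∈ Fu ∨ e ∈ Fp) → ∀ x ∈ e, ∀ z ∈ tri1 e,
      sgn1 e * (∑ i, (z i - x i) * nrm e i) ≤ 0
  outward2 : ∀ e, (e ∈ Fu0 ∨ e ∈ Fp) → ∀ x ∈ e, ∀ z ∈ tri2 e,
      sgn2 e * (∑ i, (z i - x i) * nrm e i) ≤ 0

/-- Broken (piecewise) vector-valued functions: the component living on each triangle. -/
abbrev DiscV : Type := Set V2 → V2 → Fin 2 → ℝ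
/-- Broken matrix-valued functions. -/
abbrev DiscM : Type := Set V2 → V2 → M2
/-- Broken scalar functions. -/
abbrev DiscS : Type := Set V2 → V2 → ℝ
/-- Edge-based vector functions. -/
abbrev DiscE : Type := Set V2 → V2 → Fin 2 → ℝ

namespace SDGMesh

variable (M : SDGMesh)

/-- Mesh size `h`: the maximal triangle diameter. -/
def meshSize : ℝ := (M.Th.sup fun τ => EMetric.diam τ).toReal

/-- Shape regularity with parameter `ρ`: every triangle is star-shaped with
respect to a ball of radius proportional to its diameter, and every edge has
length comparable to the diameter of its adjacent triangle. -/
def shapeRegular (ρ : ℝ) : Prop :=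
  (∀ τ ∈ M.Th, ∃ c : V2, ∃ r : ℝ, ρ * (EMetric.diam τ).toReal ≤ r ∧
      Metric.ball c r ⊆ τ ∧ ∀ x ∈ τ, ∀ y ∈ Metric.ball c r, segment ℝ x y ⊆ τ) ∧
  (∀ e, (e ∈ M.Fu ∨ e ∈ M.Fp) → ρ * (EMetric.diam (M.tri1 e)).toReal ≤ M.he e)

/-- Membership in the velocity space `U^h`: piecewise `P^k` vector fields whose
normal component is continuous across every dual edge `e ∈ F_p`. -/
def memUh (k : ℕ) (v : DiscV) : Prop :=
  (∀ τ ∈ M.Th, IsPolyOnV k τ (v τ)) ∧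
  ∀ e ∈ M.Fp, ∀ x ∈ e,
    ∑ i, v (M.tri1 e) x i * M.nrm e i = ∑ i, v (M.tri2 e) x i * M.nrm e i

/-- Membership in the gradient space `W^h`: piecewise `P^k` matrix fields with
`G n` continuous across every interior primal edge `e ∈ F_u⁰`. -/
def memWh (k : ℕ) (G : DiscM) : Prop :=
  (∀ τ ∈ M.Th, IsPolyOnM k τ (G τ)) ∧
  ∀ e ∈ M.Fu0, ∀ x ∈ e, ∀ i,
    ∑ j, G (M.tri1 e) x i j * M.nrm e j = ∑ j, G (M.tri2 e) x i j * M.nrm e j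

/-- Membership in the pressure space `P^h`: piecewise `P^k` scalars, continuous
across interior primal edges, with zero mean. -/
def memPh (k : ℕ) (q : DiscS) : Prop :=
  (∀ τ ∈ M.Th, IsPolyOn k τ (q τ)) ∧
  (∀ e ∈ M.Fu0, ∀ x ∈ e, q (M.tri1 e) x = q (M.tri2 e) x) ∧
  (∑ τ ∈ M.Th, ∫ x in τ, q τ x) = 0

/-- Membership in the edge space `Û^h`: `P^k` vector fields on each dual edge
with vanishing normal component. -/
def memUhat (k : ℕ) (vh : DiscE) : Prop :=
  ∀ e ∈ M.Fp, IsPolyOnV k e (vh e) ∧ ∀ x ∈ e, ∑ i, vh e x i * M.nrm e i = 0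

/-- Jump of `G n` across an edge. -/
def jGn (G : DiscM) (e : Set V2) (x : V2) (i : Fin 2) : ℝ :=
  M.sgn1 e * (∑ j, G (M.tri1 e) x i j * M.nrm e j)
    + M.sgn2 e * (∑ j, G (M.tri2 e) x i j * M.nrm e j)

/-- Jump of `v` across an edge. -/
def jV (v : DiscV) (e : Set V2) (x : V2) (i : Fin 2) : ℝ :=
  M.sgn1 e * v (M.tri1 e) x i + M.sgn2 e * v (M.tri2 e) x i

/-- Jump of `v · n` across an edge. -/
def jVn (v : DiscV) (e : Set V2) (x : V2) : ℝ :=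
  M.sgn1 e * (∑ i, v (M.tri1 e) x i * M.nrm e i)
    + M.sgn2 e * (∑ i, v (M.tri2 e) x i * M.nrm e i)

/-- Jump of `v · t` across an edge. -/
def jVt (v : DiscV) (e : Set V2) (x : V2) : ℝ :=
  M.sgn1 e * (∑ i, v (M.tri1 e) x i * M.tng e i)
    + M.sgn2 e * (∑ i, v (M.tri2 e) x i * M.tng e i)

/-- Jump of a broken scalar across an edge. -/
def jS (q : DiscS) (e : Set V2) (x : V2) : ℝ :=
  M.sgn1 e * q (M.tri1 e) x + M.sgn2 e * q (M.tri2 e) x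

/-- Jump of `(v·t) t·(G n)` across an edge. -/
def jVtGn (G : DiscM) (v : DiscV) (e : Set V2) (x : V2) : ℝ :=
  M.sgn1 e * (∑ i, v (M.tri1 e) x i * M.tng e i) *
      (∑ i, ∑ j, M.tng e i * G (M.tri1 e) x i j * M.nrm e j)
    + M.sgn2 e * (∑ i, v (M.tri2 e) x i * M.tng e i) *
      (∑ i, ∑ j, M.tng e i * G (M.tri2 e) x i j * M.nrm e j)

/-- Membership in the reduced gradient space `Ŵ^h ⊆ W^h`: normal continuity
across dual edges holds weakly against all of `Û^h`. -/
def memWhat (k : ℕ) (G : DiscM) : Prop :=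
  M.memWh k G ∧ ∀ vh : DiscE, M.memUhat k vh → ∀ e ∈ M.Fp,
    (∫ x in e, ∑ i, M.jGn G e x i * vh e x i ∂edgeM) = 0

/-- `Ŵ^h`, normalised so that a broken function carries no information outside
the mesh (used to compute dimensions). -/
def memWhat₀ (k : ℕ) (G : DiscM) : Prop :=
  M.memWhat k G ∧ (∀ τ, τ ∉ M.Th → G τ = 0) ∧ (∀ τ ∈ M.Th, ∀ x, x ∉ τ → G τ x = 0)

/-- `L²(Ω)` inner product of broken matrix fields. -/
def ipM (L G : DiscM) : ℝ := ∑ τ ∈ M.Th, ∫ x in τ, ∑ i, ∑ j, L τ x i j * G τ x i j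

/-- `L²(Ω)` inner product of broken vector fields. -/
def ipV (u v : DiscV) : ℝ := ∑ τ ∈ M.Th, ∫ x in τ, ∑ i, u τ x i * v τ x i

/-- `L²(Ω)` inner product of broken scalar fields. -/
def ipS (p q : DiscS) : ℝ := ∑ τ ∈ M.Th, ∫ x in τ, p τ x * q τ x

/-- Weighted inner product `(α u, v)`. -/
def ipaV (α : V2 → ℝ) (u v : DiscV) : ℝ :=
  ∑ τ ∈ M.Th, ∫ x in τ, α x * ∑ i, u τ x i * v τ x i

/-- Pairing `(f, v)` of a given vector field with a broken one. -/
def ipFV (f : V2 → Fin 2 → ℝ) (v : DiscV) : ℝ :=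
  ∑ τ ∈ M.Th, ∫ x in τ, ∑ i, f x i * v τ x i

/-- Pairing `(g, q)` of a given scalar field with a broken one. -/
def ipGS (g : V2 → ℝ) (q : DiscS) : ℝ := ∑ τ ∈ M.Th, ∫ x in τ, g x * q τ x

/-- The bilinear form `B_h^*(v, G)`. -/
def Bs (v : DiscV) (G : DiscM) : ℝ :=
  -(∑ τ ∈ M.Th, ∫ x in τ, ∑ i, v τ x i * (∑ j, pd (fun y => G τ y i j) j x))
    + ∑ e ∈ M.Fp, ∫ x in e,
        (∑ i, v (M.tri1 e) x i * M.nrm e i) * (∑ i, M.nrm e i * M.jGn G e x i) ∂edgeM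

/-- The bilinear form `B_h(G, v)`. -/
def B (G : DiscM) (v : DiscV) : ℝ :=
  (∑ τ ∈ M.Th, ∫ x in τ, ∑ i, ∑ j, G τ x i j * pd (fun y => v τ y i) j x)
    - (∑ e ∈ M.Fu, ∫ x in e,
        ∑ i, M.jV v e x i * (∑ j, G (M.tri1 e) x i j * M.nrm e j) ∂edgeM)
    - ∑ e ∈ M.Fp, ∫ x in e, M.jVtGn G v e x ∂edgeM

/-- The bilinear form `T_h(G, v̂)`. -/
def T (G : DiscM) (vh : DiscE) : ℝ :=
  ∑ e ∈ M.Fp, ∫ x in e, ∑ i, M.jGn G e x i * vh e x i ∂edgeM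

/-- The bilinear form `T_h^*(v̂, G)`. -/
def Ts (vh : DiscE) (G : DiscM) : ℝ :=
  ∑ e ∈ M.Fp, ∫ x in e, ∑ i, vh e x i * M.jGn G e x i ∂edgeM

/-- The bilinear form `b_h^*(q, v)`. -/
def bs (q : DiscS) (v : DiscV) : ℝ :=
  -(∑ τ ∈ M.Th, ∫ x in τ, q τ x * (∑ i, pd (fun y => v τ y i) i x))
    + ∑ e ∈ M.Fu, ∫ x in e, q (M.tri1 e) x * M.jVn v e x ∂edgeM

/-- The bilinear form `b_h(v, q)`. -/
def b (v : DiscV) (q : DiscS) : ℝ :=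
  (∑ τ ∈ M.Th, ∫ x in τ, ∑ i, v τ x i * pd (fun y => q τ y) i x)
    - ∑ e ∈ M.Fp, ∫ x in e,
        (∑ i, v (M.tri1 e) x i * M.nrm e i) * M.jS q e x ∂edgeM

/-- Broken `L²(Ω)`-norms. -/
def nL2M (G : DiscM) : ℝ := Real.sqrt (M.ipM G G)

def nL2V (v : DiscV) : ℝ := Real.sqrt (M.ipV v v)

def nL2S (q : DiscS) : ℝ := Real.sqrt (M.ipS q q)

/-- Weighted norm `‖α^{1/2} v‖₀`. -/
def nAl (α : V2 → ℝ) (v : DiscV) : ℝ := Real.sqrt (M.ipaV α v v)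

/-- Broken `H¹`-seminorm `‖∇_h v‖₀`. -/
def brokenGrad (v : DiscV) : ℝ :=
  Real.sqrt (∑ τ ∈ M.Th, ∫ x in τ, ∑ i, ∑ j, (pd (fun y => v τ y i) j x) ^ 2)

/-- The norm `‖v‖_{Z₁}`. -/
def nZ1 (v : DiscV) : ℝ :=
  Real.sqrt ((∑ τ ∈ M.Th, ∫ x in τ, (∑ i, pd (fun y => v τ y i) i x) ^ 2)
    + ∑ e ∈ M.Fu, (M.he e)⁻¹ * ∫ x in e, (M.jVn v e x) ^ 2 ∂edgeM)

/-- The norm `‖v‖_{Z₂}`. -/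
def nZ2 (v : DiscV) : ℝ :=
  Real.sqrt ((∑ τ ∈ M.Th, ∫ x in τ, ∑ i, ∑ j, (pd (fun y => v τ y i) j x) ^ 2)
    + (∑ e ∈ M.Fu, (M.he e)⁻¹ * ∫ x in e, ∑ i, (M.jV v e x i) ^ 2 ∂edgeM)
    + ∑ e ∈ M.Fp, (M.he e)⁻¹ * ∫ x in e, (M.jVt v e x) ^ 2 ∂edgeM)

/-- The discrete `H(div)` seminorm `‖G‖_{Z'}`. -/
def nZp (G : DiscM) : ℝ :=
  Real.sqrt ((∑ τ ∈ M.Th, ∫ x in τ, ∑ i, (∑ j, pd (fun y => G τ y i j) j x) ^ 2)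
    + ∑ e ∈ M.Fp, (M.he e)⁻¹ * ∫ x in e, ∑ i, (M.jGn G e x i) ^ 2 ∂edgeM)

/-- The discrete norm `‖G‖_{X'}`. -/
def nXp (G : DiscM) : ℝ :=
  Real.sqrt (M.ipM G G
    + (∑ e ∈ M.Fu, M.he e * ∫ x in e,
        ∑ i, (∑ j, G (M.tri1 e) x i j * M.nrm e j) ^ 2 ∂edgeM)
    + ∑ e ∈ M.Fp, M.he e * ∫ x in e,
        (∑ i, ∑ j, M.tng e i * G (M.tri1 e) x i j * M.nrm e j) ^ 2 ∂edgeM)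

/-- `(L_h, u_h, û_h, p_h)` solves the four-field SDG system with data
`ε, α, f, g`. -/
def isSolution (k : ℕ) (ε : ℝ) (α : V2 → ℝ) (f : V2 → Fin 2 → ℝ) (g : V2 → ℝ)
    (L : DiscM) (u : DiscV) (uh : DiscE) (p : DiscS) : Prop :=
  M.memWh k L ∧ M.memUh k u ∧ M.memUhat k uh ∧ M.memPh k p ∧
  (∀ G : DiscM, M.memWh k G →
    M.ipM L G = Real.sqrt ε * M.Bs u G + Real.sqrt ε * M.Ts uh G) ∧
  (∀ v : DiscV, M.memUh k v →
    Real.sqrt ε * M.B L v + M.ipaV α u v + M.bs p v = M.ipFV f v) ∧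
  (∀ q : DiscS, M.memPh k q → -(M.b u q) = M.ipGS g q) ∧
  (∀ vh : DiscE, M.memUhat k vh → M.T L vh = 0)

/-- `(L_h, u_h, p_h)` solves the reduced three-field SDG system. -/
def isSolution3 (k : ℕ) (ε : ℝ) (α : V2 → ℝ) (f : V2 → Fin 2 → ℝ) (g : V2 → ℝ)
    (L : DiscM) (u : DiscV) (p : DiscS) : Prop :=
  M.memWhat k L ∧ M.memUh k u ∧ M.memPh k p ∧
  (∀ G : DiscM, M.memWhat k G → M.ipM L G = Real.sqrt ε * M.Bs u G) ∧
  (∀ v : DiscV, M.memUh k v →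
    Real.sqrt ε * M.B L v + M.ipaV α u v + M.bs p v = M.ipFV f v) ∧
  (∀ q : DiscS, M.memPh k q → M.b u q = M.ipGS g q)

/-- `(u, p)` is an exact solution of the Brinkman problem
`-ε Δu + α u + ∇p = f`, `div u = g` in `Ω`, `u = 0` on `∂Ω`, `∫_Ω p = 0`. -/
def isExact (ε : ℝ) (α : V2 → ℝ) (f : V2 → Fin 2 → ℝ) (g : V2 → ℝ)
    (u : V2 → Fin 2 → ℝ) (p : V2 → ℝ) : Prop :=
  (∀ x ∈ M.Ω, ∀ i, -ε * (∑ j, pd (fun y => pd (fun z => u z i) j y) j x)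
      + α x * u x i + pd p i x = f x i) ∧
  (∀ x ∈ M.Ω, (∑ i, pd (fun y => u y i) i x) = g x) ∧
  (∀ x ∈ frontier M.Ω, ∀ i, u x i = 0) ∧
  (∫ x in M.Ω, p x) = 0

/-- The matrix field `L = √ε ∇u`. -/
def gradL (ε : ℝ) (u : V2 → Fin 2 → ℝ) : V2 → M2 :=
  fun x => Matrix.of fun i j => Real.sqrt ε * pd (fun y => u y i) j x

/-- `Pih` is the interpolation operator `Π_h : H¹(Ω)^{2×2} → Ŵ^h` characterised
by `Π_h L ∈ Ŵ^h` and `B_h(L - Π_h L, v) = 0` for all `v ∈ U^h`. -/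
def isPih (k : ℕ) (Pih : (V2 → M2) → DiscM) : Prop :=
  ∀ L : V2 → M2, (∀ i j, ContDiff ℝ 1 fun x => L x i j) →
    M.memWhat k (Pih L) ∧
    ∀ v : DiscV, M.memUh k v → M.B (fun τ x => L x - Pih L τ x) v = 0

/-- `Jh` is the velocity projection `J_h : H¹(Ω)² → U^h` of the paper. -/
def isJh (k : ℕ) (Jh : (V2 → Fin 2 → ℝ) → DiscV) : Prop :=
  ∀ v : V2 → Fin 2 → ℝ, (∀ i, ContDiff ℝ 1 fun x => v x i) →
    M.memUh k (Jh v) ∧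
    (∀ e ∈ M.Fp, ∀ φ : V2 → ℝ, IsPolyOn k e φ →
      (∫ x in e, (∑ i, (Jh v (M.tri1 e) x i - v x i) * M.nrm e i) * φ x ∂edgeM) = 0) ∧
    (∀ τ ∈ M.Th, ∀ φ : V2 → Fin 2 → ℝ, IsPolyOnLtV k τ φ →
      (∫ x in τ, ∑ i, (Jh v τ x i - v x i) * φ x i) = 0)

/-- `Ih` is the pressure projection `I_h : H¹(Ω) → P^h` of the paper. -/
def isIh (k : ℕ) (Ih : (V2 → ℝ) → DiscS) : Prop :=
  ∀ q : V2 → ℝ, ContDiff ℝ 1 q →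
    (∀ τ ∈ M.Th, IsPolyOn k τ (Ih q τ)) ∧
    (∀ e ∈ M.Fu0, ∀ x ∈ e, Ih q (M.tri1 e) x = Ih q (M.tri2 e) x) ∧
    (∀ e ∈ M.Fu, ∀ φ : V2 → ℝ, IsPolyOn k e φ →
      (∫ x in e, (Ih q (M.tri1 e) x - q x) * φ x ∂edgeM) = 0) ∧
    (∀ τ ∈ M.Th, ∀ φ : V2 → ℝ, IsPolyOnLt k τ φ →
      (∫ x in τ, (Ih q τ x - q x) * φ x) = 0)

/-- Elliptic regularity for the dual (auxiliary) Brinkman problem on `Ω`: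
for every datum `θ` there is a solution `(φ, χ)` of
`-ε Δφ + α φ + ∇χ = θ`, `div φ = 0`, `φ|_∂Ω = 0` with
`‖φ‖₂ + ‖χ‖₁ ≤ C_reg ‖θ‖₀`. -/
def ellipticReg (ε : ℝ) (α : V2 → ℝ) (Creg : ℝ) : Prop :=
  ∀ θ : V2 → Fin 2 → ℝ, (∀ i, Continuous fun x => θ x i) →
    ∃ φ : V2 → Fin 2 → ℝ, ∃ χ : V2 → ℝ,
      (∀ i, ContDiff ℝ 2 fun x => φ x i) ∧ ContDiff ℝ 1 χ ∧
      (∀ x ∈ M.Ω, ∀ i, -ε * (∑ j, pd (fun y => pd (fun z => φ z i) j y) j x)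
          + α x * φ x i + pd χ i x = θ x i) ∧
      (∀ x ∈ M.Ω, (∑ i, pd (fun y => φ y i) i x) = 0) ∧
      (∀ x ∈ frontier M.Ω, ∀ i, φ x i = 0) ∧
      sobNormV 2 M.Ω φ + sobNormS 1 M.Ω χ ≤ Creg * nL2V0 M.Ω θ

/-- Continuous inf-sup (surjectivity of the divergence) on `Ω`, with constant
`Cdom`, stated against broken scalar test functions with zero mean. -/
def domInfSup (Cdom : ℝ) : Prop :=
  ∀ r : DiscS, (∑ τ ∈ M.Th, ∫ x in τ, r τ x) = 0 →
    ∃ v : V2 → Fin 2 → ℝ, (∀ i, ContDiff ℝ 1 fun x => v x i) ∧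
      (∀ x ∈ frontier M.Ω, ∀ i, v x i = 0) ∧ sobNormV 1 M.Ω v ≤ 1 ∧
      M.nL2S r ≤ Cdom * ∑ τ ∈ M.Th, ∫ x in τ, (∑ i, pd (fun y => v y i) i x) * r τ x

end SDGMesh

/-!
Writing `x × y = x₀ y₁ - x₁ y₀`, the determinant of `A` factors as
`-(n⁽¹⁾ × n⁽²⁾) (n⁽¹⁾ × n⁽³⁾) (t⁽²⁾ × t⁽³⁾)`. The first two factors are nonzero by linear
independence. For the third, the planar Lagrange identity gives
`(t⁽²⁾ × t⁽³⁾) (n⁽²⁾ × n⁽³⁾) = -(t⁽²⁾ · n⁽³⁾) (t⁽³⁾ · n⁽²⁾)`, and a nonzero vector orthogonal to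
`n⁽²⁾` cannot also be orthogonal to `n⁽³⁾`, since these span the plane. The map
`G ↦ (G n⁽¹⁾, t⁽²⁾ · G n⁽²⁾, t⁽³⁾ · G n⁽³⁾)` is `A` read through `G ↦ (G₁₁, G₁₂, G₂₁, G₂₂)`.
-/

open Matrix

section LocalMatrix

variable {R : Type*} [CommRing R]

lemma det_of_pair_ne_zero_of_linearIndependent {K : Type*} [Field K] {x y : Fin 2 → K}
    (h : LinearIndependent K ![x, y]) : (of ![x, y]).det ≠ 0 :=
  ((isUnit_iff_isUnit_det _).1 (linearIndependent_rows_iff_isUnit.1 h)).ne_zero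

lemma det_of_pair_swap (x y : Fin 2 → R) : (of ![y, x]).det = -(of ![x, y]).det := by
  simp only [det_fin_two, of_apply, cons_val_zero, cons_val_one]
  ring

lemma det_of_pair_mul_det_of_pair (t s n m : Fin 2 → R) :
    (of ![t, s]).det * (of ![n, m]).det = t ⬝ᵥ n * s ⬝ᵥ m - t ⬝ᵥ m * s ⬝ᵥ n := by
  simp only [det_fin_two, dotProduct, Fin.sum_univ_two, of_apply, cons_val_zero, cons_val_one]
  ring

lemma dotProduct_ne_zero_of_orthogonal [NoZeroDivisors R] {t n m : Fin 2 → R} (ht : t ≠ 0)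
    (htn : t ⬝ᵥ n = 0) (hnm : (of ![n, m]).det ≠ 0) : t ⬝ᵥ m ≠ 0 := by
  intro htm
  refine ht (eq_zero_of_mulVec_eq_zero hnm ?_)
  ext i
  fin_cases i <;> simp [mulVec, dotProduct_comm, htn, htm]

lemma det_of_pair_ne_zero_of_orthogonal [NoZeroDivisors R] {t s n m : Fin 2 → R}
    (ht : t ≠ 0) (hs : s ≠ 0) (htn : t ⬝ᵥ n = 0) (hsm : s ⬝ᵥ m = 0)
    (hnm : (of ![n, m]).det ≠ 0) : (of ![t, s]).det ≠ 0 := by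
  have hmn : (of ![m, n]).det ≠ 0 := by rwa [det_of_pair_swap, neg_ne_zero]
  have hprod : (of ![t, s]).det * (of ![n, m]).det = -(t ⬝ᵥ m * s ⬝ᵥ n) := by
    rw [det_of_pair_mul_det_of_pair, htn, zero_mul, zero_sub]
  refine left_ne_zero_of_mul (b := (of ![n, m]).det) ?_
  rw [hprod]
  exact neg_ne_zero.2 (mul_ne_zero (dotProduct_ne_zero_of_orthogonal ht htn hnm)
    (dotProduct_ne_zero_of_orthogonal hs hsm hmn))

def localMatrix (n1 n2 n3 t2 t3 : Fin 2 → R) : Matrix (Fin 4) (Fin 4) R :=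
  of ![![n1 0, n1 1, 0, 0],
    ![0, 0, n1 0, n1 1],
    ![t2 0 * n2 0, t2 0 * n2 1, t2 1 * n2 0, t2 1 * n2 1],
    ![t3 0 * n3 0, t3 0 * n3 1, t3 1 * n3 0, t3 1 * n3 1]]

lemma det_localMatrix (n1 n2 n3 t2 t3 : Fin 2 → R) :
    (localMatrix n1 n2 n3 t2 t3).det =
      -((of ![n1, n2]).det * (of ![n1, n3]).det * (of ![t2, t3]).det) := by
  simp [localMatrix, det_succ_row_zero, Fin.sum_univ_succ, Fin.succAbove]
  ring

def flattenEquiv : Matrix (Fin 2) (Fin 2) R ≃ (Fin 4 → R) where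
  toFun G := ![G 0 0, G 0 1, G 1 0, G 1 1]
  invFun v := !![v 0, v 1; v 2, v 3]
  left_inv G := by ext i j; fin_cases i <;> fin_cases j <;> rfl
  right_inv v := by ext i; fin_cases i <;> rfl

def splitEquiv : (Fin 4 → R) ≃ (Fin 2 → R) × R × R where
  toFun v := (![v 0, v 1], v 2, v 3)
  invFun p := ![p.1 0, p.1 1, p.2.1, p.2.2]
  left_inv v := by ext i; fin_cases i <;> rfl
  right_inv p := by
    ext i
    · fin_cases i <;> rfl
    all_goals rfl

lemma splitEquiv_localMatrix_mulVec_flattenEquiv (n1 n2 n3 t2 t3 : Fin 2 → R)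
    (G : Matrix (Fin 2) (Fin 2) R) :
    splitEquiv (localMatrix n1 n2 n3 t2 t3 *ᵥ flattenEquiv G) =
      (G *ᵥ n1, t2 ⬝ᵥ G *ᵥ n2, t3 ⬝ᵥ G *ᵥ n3) := by
  simp [splitEquiv, flattenEquiv, localMatrix, mulVec, dotProduct, Fin.sum_univ_succ]
  constructor <;> ring

lemma bijective_of_isUnit_localMatrix {n1 n2 n3 t2 t3 : Fin 2 → R}
    (h : IsUnit (localMatrix n1 n2 n3 t2 t3)) :
    Function.Bijective fun G : Matrix (Fin 2) (Fin 2) R =>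
      (G *ᵥ n1, t2 ⬝ᵥ G *ᵥ n2, t3 ⬝ᵥ G *ᵥ n3) := by
  have hA : Function.Bijective (localMatrix n1 n2 n3 t2 t3).mulVec :=
    ⟨mulVec_injective_of_isUnit h, mulVec_surjective_iff_isUnit.2 h⟩
  convert splitEquiv.bijective.comp (hA.comp flattenEquiv.bijective) using 1
  ext1 G
  exact (splitEquiv_localMatrix_mulVec_flattenEquiv n1 n2 n3 t2 t3 G).symm

end LocalMatrix

/-- invertibility of the local matrix `A` in the unisolvence
proof: if `n⁽¹⁾, n⁽²⁾, n⁽³⁾` are pairwise linearly independent and `t⁽²⁾ ⟂ n⁽²⁾`,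
`t⁽³⁾ ⟂ n⁽³⁾` are nonzero, then the 4×4 matrix `A` is invertible; equivalently
`G ↦ (G n⁽¹⁾, t⁽²⁾·(G n⁽²⁾), t⁽³⁾·(G n⁽³⁾))` is a linear isomorphism of the
space of 2×2 matrices onto `ℝ⁴ = ℝ² × ℝ × ℝ`. -/
theorem local_matrix_invertible (n1 n2 n3 t2 t3 : Fin 2 → ℝ)
    (h12 : LinearIndependent ℝ ![n1, n2])
    (h13 : LinearIndependent ℝ ![n1, n3])
    (h23 : LinearIndependent ℝ ![n2, n3])
    (ht2 : t2 ≠ 0) (ht3 : t3 ≠ 0)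
    (ho2 : t2 0 * n2 0 + t2 1 * n2 1 = 0)
    (ho3 : t3 0 * n3 0 + t3 1 * n3 1 = 0) :
    IsUnit (Matrix.of ![![n1 0, n1 1, 0, 0],
        ![0, 0, n1 0, n1 1],
        ![t2 0 * n2 0, t2 0 * n2 1, t2 1 * n2 0, t2 1 * n2 1],
        ![t3 0 * n3 0, t3 0 * n3 1, t3 1 * n3 0, t3 1 * n3 1]] :
      Matrix (Fin 4) (Fin 4) ℝ) ∧
    Function.Bijective (fun G : Matrix (Fin 2) (Fin 2) ℝ =>
      (G.mulVec n1, ∑ i, t2 i * G.mulVec n2 i, ∑ i, t3 i * G.mulVec n3 i)) := by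
  have hA : IsUnit (localMatrix n1 n2 n3 t2 t3) := by
    rw [isUnit_iff_isUnit_det, det_localMatrix, isUnit_iff_ne_zero, neg_ne_zero]
    refine mul_ne_zero (mul_ne_zero (det_of_pair_ne_zero_of_linearIndependent h12)
      (det_of_pair_ne_zero_of_linearIndependent h13)) ?_
    refine det_of_pair_ne_zero_of_orthogonal ht2 ht3 ?_ ?_
      (det_of_pair_ne_zero_of_linearIndependent h23)
    · simpa only [dotProduct, Fin.sum_univ_two] using ho2
    · simpa only [dotProduct, Fin.sum_univ_two] using ho3
  exact ⟨hA, bijective_of_isUnit_localMatrix hA⟩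
end
end

section
/- The projections I_h and J_h satisfy the discrete orthogonality relations b_h(v − J_h v, q) = 0 for all q ∈ P^h and all v ∈ H¹(Ω)², and b_h*(q − I_h q, v) = 0 for all v ∈ U^h and all q ∈ H¹(Ω). -/
/-!
Common abstract framework for the staggered DG (SDG) method for the Brinkman
problem of Zhao–Chung–Lam.  The computational plane is `ℝ²` (as a Euclidean
space); a staggered mesh is recorded as a structure containing the simplicial
submesh `Th`, the primal edges `Fu` (with interior primal edges `Fu0`), the
dual edges `Fp`, together with unit normals/tangents, the two triangles
adjacent to each edge, the orientation signs used for jumps, and basic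
geometric axioms.  Discrete (broken piecewise-polynomial) functions are
represented by families of functions indexed by the triangle on which they
live, so that jumps across edges are honest algebraic expressions.
-/

open MeasureTheory Finset

noncomputable section

/-!
On each triangle `τ`, the gradient of `q ∈ P^k(τ)` and the divergence of `v ∈ P^k(τ)²` are
polynomials of degree `< k` (zero when `k = 0`), so the volume terms of `b_h` and `b_h^*` only
see the moments of `v - J_h v` and `q - I_h q` against `P^{k-1}(τ)`, which vanish by construction.
On each edge, the jumps `[q]` and `[v · n]` are polynomials of degree `≤ k` (on a boundary primal
edge the second sign is `0`), so the edge terms only see the edge moments against `P^k(e)`,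
which vanish as well.
-/

namespace MvPolynomial

variable {σ R : Type*} [CommSemiring R]

theorem totalDegree_pderiv_le (i : σ) (p : MvPolynomial σ R) :
    (pderiv i p).totalDegree ≤ p.totalDegree - 1 := by
  classical
  refine Finset.sup_le fun m hm => ?_
  have hm' : m + Finsupp.single i 1 ∈ p.support := by
    rw [mem_support_iff, coeff_pderiv] at hm
    exact mem_support_iff.mpr (left_ne_zero_of_mul hm)
  have := le_totalDegree hm'
  rw [Finsupp.sum_add_index' (fun _ => rfl) (fun _ _ _ => rfl),
    Finsupp.sum_single_index rfl] at this
  omega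

theorem totalDegree_pderiv_lt {k : ℕ} (hk : 0 < k) {p : MvPolynomial σ R}
    (hp : p.totalDegree ≤ k) (i : σ) : (pderiv i p).totalDegree < k :=
  (totalDegree_pderiv_le i p).trans_lt (by omega)

theorem pderiv_eq_zero_of_totalDegree_eq_zero {p : MvPolynomial σ R}
    (hp : p.totalDegree = 0) (i : σ) : pderiv i p = 0 := by
  rw [totalDegree_eq_zero_iff_eq_C.mp hp, pderiv_C]

theorem hasFDerivAt_eval_euclidean {ι : Type*} [Fintype ι] (p : MvPolynomial ι ℝ)
    (x : EuclideanSpace ℝ ι) :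
    HasFDerivAt (fun y : EuclideanSpace ℝ ι => eval (fun i => y i) p)
      (∑ j, eval (fun i => x i) (pderiv j p) • EuclideanSpace.proj (𝕜 := ℝ) j) x := by
  classical
  induction p using MvPolynomial.induction_on with
  | C a => simpa using hasFDerivAt_const a x
  | add p q hp hq =>
    simp only [map_add, add_smul, Finset.sum_add_distrib]
    exact hp.add hq
  | mul_X p n hp =>
    simp only [eval_mul, eval_X]
    refine (hp.mul (EuclideanSpace.proj n).hasFDerivAt).congr_fderiv ?_
    ext w
    simp [pderiv_X, Pi.single_apply, apply_ite (eval _), Finset.mul_sum, mul_add,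
      Finset.sum_add_distrib, mul_comm, mul_left_comm]

end MvPolynomial

open MvPolynomial

theorem pd_eval (p : MvPolynomial (Fin 2) ℝ) (j : Fin 2) (x : V2) :
    pd (fun y => eval (fun i => y i) p) j x = eval (fun i => x i) (pderiv j p) := by
  fin_cases j <;> simp [pd, (hasFDerivAt_eval_euclidean p x).fderiv]

theorem pd_eq_eval_pderiv_of_eqOn_interior {τ : Set V2} {f : V2 → ℝ}
    {p : MvPolynomial (Fin 2) ℝ} (hfp : ∀ x ∈ τ, f x = eval (fun i => x i) p) (j : Fin 2)
    {x : V2} (hx : x ∈ interior τ) : pd f j x = eval (fun i => x i) (pderiv j p) := by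
  have hf : f =ᶠ[nhds x] fun y => eval (fun i => y i) p :=
    Filter.eventuallyEq_of_mem (isOpen_interior.mem_nhds hx) fun y hy =>
      hfp y (interior_subset hy)
  rw [pd, hf.fderiv_eq, ← pd, pd_eval]

theorem Convex.setIntegral_congr_of_eqOn_interior {E F : Type*} [NormedAddCommGroup E]
    [NormedSpace ℝ E] [MeasurableSpace E] [BorelSpace E] [FiniteDimensional ℝ E]
    [NormedAddCommGroup F] [NormedSpace ℝ F] {μ : Measure E} [μ.IsAddHaarMeasure]
    {τ : Set E} (hτ : Convex ℝ τ) {f g : E → F} (hfg : Set.EqOn f g (interior τ)) :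
    ∫ x in τ, f x ∂μ = ∫ x in τ, g x ∂μ := by
  refine setIntegral_congr_ae₀ (hτ.nullMeasurableSet (μ := μ)) ?_
  filter_upwards [measure_eq_zero_iff_ae_notMem.mp (hτ.addHaar_frontier μ)] with x hx hxτ
  exact hfg (by_contra fun h => hx ⟨subset_closure hxτ, h⟩)

theorem integral_eq_zero_of_eq_neg {α : Type*} [MeasurableSpace α] {μ : Measure α}
    {f g : α → ℝ} (hg : ∫ x, g x ∂μ = 0) (hfg : ∀ x, f x = -g x) : ∫ x, f x ∂μ = 0 := by
  simp [funext hfg, integral_neg, hg]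

namespace IsPolyOn

variable {k : ℕ} {s : Set V2} {f g : V2 → ℝ}

theorem mono (hf : IsPolyOn k s f) {t : Set V2} (hts : t ⊆ s) : IsPolyOn k t f :=
  let ⟨p, hp, hfp⟩ := hf
  ⟨p, hp, fun x hx => hfp x (hts hx)⟩

theorem const_mul (hf : IsPolyOn k s f) (c : ℝ) : IsPolyOn k s fun x => c * f x :=
  let ⟨p, hp, hfp⟩ := hf
  ⟨c • p, (totalDegree_smul_le c p).trans hp, fun x hx => by simp [hfp x hx]⟩

theorem mul_const (hf : IsPolyOn k s f) (c : ℝ) : IsPolyOn k s fun x => f x * c := by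
  simpa only [mul_comm _ c] using hf.const_mul c

theorem add (hf : IsPolyOn k s f) (hg : IsPolyOn k s g) : IsPolyOn k s fun x => f x + g x :=
  let ⟨p, hp, hfp⟩ := hf
  let ⟨q, hq, hgq⟩ := hg
  ⟨p + q, (totalDegree_add p q).trans (max_le hp hq), fun x hx => by simp [hfp x hx, hgq x hx]⟩

theorem sum {ι : Type*} (t : Finset ι) {F : ι → V2 → ℝ} (hF : ∀ i ∈ t, IsPolyOn k s (F i)) :
    IsPolyOn k s fun x => ∑ i ∈ t, F i x := by
  classical
  induction t using Finset.induction_on with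
  | empty => exact ⟨0, by simp, by simp⟩
  | insert a t ha ih =>
    simp only [Finset.sum_insert ha]
    exact (hF a (Finset.mem_insert_self a t)).add
      (ih fun i hi => hF i (Finset.mem_insert_of_mem hi))

end IsPolyOn

theorem IsPolyOnV.sum_mul_const {k : ℕ} {s : Set V2} {f : V2 → Fin 2 → ℝ}
    (hf : IsPolyOnV k s f) (n : V2) : IsPolyOn k s fun x => ∑ i, f x i * n i :=
  IsPolyOn.sum _ fun i _ => (hf i).mul_const (n i)

section Moments

variable {k : ℕ} {τ : Set V2}

theorem setIntegral_sum_mul_pd_eq_zero (hτ : Convex ℝ τ) {f : V2 → ℝ} (hf : IsPolyOn k τ f)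
    {g : V2 → Fin 2 → ℝ}
    (hg : ∀ φ, IsPolyOnLtV k τ φ → ∫ x in τ, ∑ i, g x i * φ x i = 0) :
    ∫ x in τ, ∑ i, g x i * pd f i x = 0 := by
  obtain ⟨p, hpk, hfp⟩ := hf
  calc ∫ x in τ, ∑ i, g x i * pd f i x
      = ∫ x in τ, ∑ i, g x i * eval (fun l => x l) (pderiv i p) :=
        hτ.setIntegral_congr_of_eqOn_interior fun x hx => by
          simp only [pd_eq_eval_pderiv_of_eqOn_interior hfp _ hx]
    _ = 0 := by
      rcases Nat.eq_zero_or_pos k with rfl | hk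
      · simp [pderiv_eq_zero_of_totalDegree_eq_zero (Nat.le_zero.mp hpk)]
      · exact hg _ fun i => ⟨pderiv i p, totalDegree_pderiv_lt hk hpk i, fun _ _ => rfl⟩

theorem setIntegral_mul_sum_pd_eq_zero (hτ : Convex ℝ τ) {f : V2 → Fin 2 → ℝ}
    (hf : IsPolyOnV k τ f) {g : V2 → ℝ}
    (hg : ∀ φ, IsPolyOnLt k τ φ → ∫ x in τ, g x * φ x = 0) :
    ∫ x in τ, g x * ∑ i, pd (fun y => f y i) i x = 0 := by
  choose p hpk hfp using hf
  calc ∫ x in τ, g x * ∑ i, pd (fun y => f y i) i x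
      = ∫ x in τ, g x * eval (fun l => x l) (∑ i, pderiv i (p i)) :=
        hτ.setIntegral_congr_of_eqOn_interior fun x hx => by
          simp only [pd_eq_eval_pderiv_of_eqOn_interior (hfp _) _ hx, map_sum]
    _ = 0 := by
      rcases Nat.eq_zero_or_pos k with rfl | hk
      · simp [fun i => pderiv_eq_zero_of_totalDegree_eq_zero (Nat.le_zero.mp (hpk i)) i]
      · refine hg _ ⟨∑ i, pderiv i (p i), ?_, fun _ _ => rfl⟩
        exact (totalDegree_finsetSum _ _).trans_lt <| (Finset.sup_lt_iff hk).mpr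
          fun i _ => totalDegree_pderiv_lt hk (hpk i) i

end Moments

namespace SDGMesh

variable (M : SDGMesh) {k : ℕ} {e : Set V2}

theorem subset_tri1 (he : e ∈ M.Fu ∨ e ∈ M.Fp) : e ⊆ M.tri1 e :=
  (M.edge_sub1 e he).trans (M.tri_convex _ (M.tri1_mem e he)).2.1.isClosed.frontier_subset

theorem subset_tri2 (he : e ∈ M.Fu0 ∨ e ∈ M.Fp) : e ⊆ M.tri2 e :=
  (M.edge_sub2 e he).trans (M.tri_convex _ (M.tri2_mem e he)).2.1.isClosed.frontier_subset

theorem isPolyOn_jump (he : e ∈ M.Fu ∨ e ∈ M.Fp) {f₁ f₂ : V2 → ℝ} (h₁ : IsPolyOn k e f₁)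
    (h₂ : e ∈ M.Fu0 ∨ e ∈ M.Fp → IsPolyOn k e f₂) :
    IsPolyOn k e fun x => M.sgn1 e * f₁ x + M.sgn2 e * f₂ x := by
  by_cases hin : e ∈ M.Fu0 ∨ e ∈ M.Fp
  · exact (h₁.const_mul _).add ((h₂ hin).const_mul _)
  · obtain ⟨hnu, hnp⟩ := not_or.mp hin
    simpa [M.sgn2_bd e (he.resolve_right hnp) hnu] using h₁.const_mul (M.sgn1 e)

theorem isPolyOn_jS {q : DiscS} (hq : ∀ τ ∈ M.Th, IsPolyOn k τ (q τ))
    (he : e ∈ M.Fu ∨ e ∈ M.Fp) : IsPolyOn k e (M.jS q e) :=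
  M.isPolyOn_jump he ((hq _ (M.tri1_mem e he)).mono (M.subset_tri1 he))
    fun he' => (hq _ (M.tri2_mem e he')).mono (M.subset_tri2 he')

theorem isPolyOn_jVn {v : DiscV} (hv : ∀ τ ∈ M.Th, IsPolyOnV k τ (v τ))
    (he : e ∈ M.Fu ∨ e ∈ M.Fp) : IsPolyOn k e (M.jVn v e) :=
  M.isPolyOn_jump he (((hv _ (M.tri1_mem e he)).sum_mul_const _).mono (M.subset_tri1 he))
    fun he' => ((hv _ (M.tri2_mem e he')).sum_mul_const _).mono (M.subset_tri2 he')

theorem b_eq_zero_of_moments_eq_zero {w : DiscV} {q : DiscS}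
    (hw_tri : ∀ τ ∈ M.Th, ∀ φ, IsPolyOnLtV k τ φ → ∫ x in τ, ∑ i, w τ x i * φ x i = 0)
    (hw_edge : ∀ e ∈ M.Fp, ∀ φ, IsPolyOn k e φ →
      ∫ x in e, (∑ i, w (M.tri1 e) x i * M.nrm e i) * φ x ∂edgeM = 0)
    (hq : ∀ τ ∈ M.Th, IsPolyOn k τ (q τ)) : M.b w q = 0 := by
  have h_tri : ∑ τ ∈ M.Th, ∫ x in τ, ∑ i, w τ x i * pd (fun y => q τ y) i x = 0 :=
    Finset.sum_eq_zero fun τ hτ =>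
      setIntegral_sum_mul_pd_eq_zero (M.tri_convex τ hτ).1 (hq τ hτ) (hw_tri τ hτ)
  have h_edge : ∑ e ∈ M.Fp, ∫ x in e,
      (∑ i, w (M.tri1 e) x i * M.nrm e i) * M.jS q e x ∂edgeM = 0 :=
    Finset.sum_eq_zero fun e he => hw_edge e he _ (M.isPolyOn_jS hq (Or.inr he))
  rw [b, h_tri, h_edge, sub_zero]

theorem bs_eq_zero_of_moments_eq_zero {r : DiscS} {v : DiscV}
    (hr_tri : ∀ τ ∈ M.Th, ∀ φ, IsPolyOnLt k τ φ → ∫ x in τ, r τ x * φ x = 0)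
    (hr_edge : ∀ e ∈ M.Fu, ∀ φ, IsPolyOn k e φ → ∫ x in e, r (M.tri1 e) x * φ x ∂edgeM = 0)
    (hv : ∀ τ ∈ M.Th, IsPolyOnV k τ (v τ)) : M.bs r v = 0 := by
  have h_tri : ∑ τ ∈ M.Th, ∫ x in τ, r τ x * ∑ i, pd (fun y => v τ y i) i x = 0 :=
    Finset.sum_eq_zero fun τ hτ =>
      setIntegral_mul_sum_pd_eq_zero (M.tri_convex τ hτ).1 (hv τ hτ) (hr_tri τ hτ)
  have h_edge : ∑ e ∈ M.Fu, ∫ x in e, r (M.tri1 e) x * M.jVn v e x ∂edgeM = 0 :=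
    Finset.sum_eq_zero fun e he => hr_edge e he _ (M.isPolyOn_jVn hv (Or.inl he))
  rw [bs, h_tri, h_edge, neg_zero, zero_add]

end SDGMesh

/-- discrete orthogonality relations of the projections
`J_h` and `I_h`: `b_h(v - J_h v, q) = 0` for all `q ∈ P^h`, `v ∈ H¹(Ω)²`, and
`b_h^*(q - I_h q, v) = 0` for all `v ∈ U^h`, `q ∈ H¹(Ω)`. -/
theorem projection_orthogonality (M : SDGMesh) (k : ℕ)
    (Jh : (V2 → Fin 2 → ℝ) → DiscV) (hJh : M.isJh k Jh)
    (Ih : (V2 → ℝ) → DiscS) (hIh : M.isIh k Ih) :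
    (∀ v : V2 → Fin 2 → ℝ, (∀ i, ContDiff ℝ 1 fun x => v x i) →
      ∀ q : DiscS, M.memPh k q →
        M.b (fun τ x i => v x i - Jh v τ x i) q = 0) ∧
    (∀ q : V2 → ℝ, ContDiff ℝ 1 q →
      ∀ v : DiscV, M.memUh k v →
        M.bs (fun τ x => q x - Ih q τ x) v = 0) := by
  refine ⟨fun v hv q hq => ?_, fun q hq v hv => ?_⟩
  · obtain ⟨-, hJ_edge, hJ_tri⟩ := hJh v hv
    refine M.b_eq_zero_of_moments_eq_zero (fun τ hτ φ hφ => ?_) (fun e he φ hφ => ?_) hq.1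
    · refine integral_eq_zero_of_eq_neg (hJ_tri τ hτ φ hφ) fun x => ?_
      simp only [← Finset.sum_neg_distrib, ← neg_mul, neg_sub]
    · refine integral_eq_zero_of_eq_neg (hJ_edge e he φ hφ) fun x => ?_
      simp only [← Finset.sum_neg_distrib, ← neg_mul, neg_sub]
  · obtain ⟨-, -, hI_edge, hI_tri⟩ := hIh q hq
    refine M.bs_eq_zero_of_moments_eq_zero (fun τ hτ φ hφ => ?_) (fun e he φ hφ => ?_) hv.1
    · exact integral_eq_zero_of_eq_neg (hI_tri τ hτ φ hφ) fun x => by ring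
    · exact integral_eq_zero_of_eq_neg (hI_edge e he φ hφ) fun x => by ring
end
end
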